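/- In Setting (V), assume additionally: ψ(a+b) ≤ C_ψ·(ψ(a) + ψ(b)) for all a, b ≥ 0 with C_ψ ≥ 1; the regularization functional is R(r̂) := Ř((I−P)(r⁻¹(r̂))) + R_P(P(r⁻¹(r̂))), where R_P: X → [0,∞] satisfies R_P(0) = 0 and R_P(v) ≥ γ·ψ(C_P·‖v‖^p) for all v, with γ > C_ψ and C_P ≥ 2^{p−1}·‖K‖^p·L_r^p; and Q(r(x†), r̂)^p ≤ C̃_Q·(Δ_ξ((I−P)(r⁻¹(r̂)), x†) + ψ(C_P·‖P(r⁻¹(r̂))‖^p)) for all r̂ ∈ X̃. Fix β > 0 and set C̄ := 2^{2p−2}·C_ψ; assume η ≤ C_η·δ^p, α ≤ β, and τ̲·δ^p ≤ α·(−ψ)*(−1/(2C̄α)) ≤ τ̄·δ^p with (−ψ)*(−1/(C̄α)) < ∞. Let the split-minimization pair (r̂_sm, x_sm) ∈ X̃ × U satisfy J_α(r̂_sm) ≤ J_α(r̂) + η for all r̂ ∈ X̃ and J_β(r̂_sm, x_sm) ≤ J_β(r̂_sm, x) + η for all x ∈ U, where J_α(r̂) := ‖K r̂ + F(x₀) −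 y^δ‖^p + α·R(r̂) and J_β(r̂, x) := β·Q(r(x), r̂)^p + ‖P(x)‖^p. Then there is a constant C depending only on p, b, γ, C_ψ, C̃_Q, C_η, τ̲, τ̄ such that: Δ_ξ((I−P)(r⁻¹(r̂_sm)), x†) + ψ(C_P·‖P(r⁻¹(r̂_sm))‖^p) + Q(r(x_sm), r̂_sm)^p + (1/β)·‖P(x_sm)‖^p ≤ C·(−ψ)*(−1/(2C̄α)) and ‖K(r̂_sm − r(x†))‖^p ≤ C·δ^p. -/

import Mathlib

/-!
Comparing the first functional at `r̂_sm` with its value at `r(x†)` and inserting the variational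
source condition at `(I-P)(r⁻¹ r̂_sm)` controls the Bregman distance, the penalty and the data
misfit up to `ψ(‖K(r((I-P)r⁻¹ r̂_sm) - r(x†))‖^p)`. The Lipschitz bound on `r` and the
quasi-subadditivity of `ψ` split this into the penalty `ψ(C_P ‖P r⁻¹ r̂_sm‖^p)` and
`ψ(2^{p-1}‖K(r̂_sm - r(x†))‖^p)`; the Fenchel–Young inequality
`ψ(t) ≤ (-ψ)*(-1/(2C̄α)) + t/(2C̄α)` bounds the latter by the conjugate plus half the data misfit,
which is absorbed. The parameter choice turns `δ^p` and `η/α` into multiples of the conjugate.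
For the second functional one compares with `x†`, where `P x† = 0`, and the assumed bound on
`Q(r(x†), ·)^p` reduces it to the first estimate.
-/

/-- The convex conjugate of `-ψ`: `(-ψ)*(s) = sup_{t ≥ 0} (s·t + ψ(t)) ∈ [0,∞]`. -/
noncomputable def negConj (ψ : ℝ → ℝ) (s : ℝ) : EReal :=
  ⨆ t : {t : ℝ // 0 ≤ t}, ((s * t.1 + ψ t.1 : ℝ) : EReal)

theorem Real.rpow_add_le_mul_rpow_add_rpow {a c p : ℝ} (ha : 0 ≤ a) (hc : 0 ≤ c)
    (hp : 1 ≤ p) :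
    (a + c) ^ p ≤ 2 ^ (p - 1) * (a ^ p + c ^ p) := by
  lift a to NNReal using ha
  lift c to NNReal using hc
  exact_mod_cast NNReal.rpow_add_le_mul_rpow_add_rpow a c hp

theorem norm_add_rpow_le {E : Type*} [SeminormedAddCommGroup E] (u w : E) {p : ℝ}
    (hp : 1 ≤ p) :
    ‖u + w‖ ^ p ≤ 2 ^ (p - 1) * (‖u‖ ^ p + ‖w‖ ^ p) :=
  (Real.rpow_le_rpow (norm_nonneg _) (norm_add_le u w) (by linarith)).trans
    (Real.rpow_add_le_mul_rpow_add_rpow (norm_nonneg u) (norm_nonneg w) hp)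

theorem norm_sub_rpow_le {E : Type*} [SeminormedAddCommGroup E] (u w : E) {p : ℝ}
    (hp : 1 ≤ p) :
    ‖u - w‖ ^ p ≤ 2 ^ (p - 1) * (‖u‖ ^ p + ‖w‖ ^ p) := by
  simpa only [sub_eq_add_neg, norm_neg] using norm_add_rpow_le u (-w) hp

theorem EReal.ne_top_of_coe_mul_le {a c : ℝ} {x : EReal} (ha : 0 < a)
    (h : (a : EReal) * x ≤ c) : x ≠ ⊤ := by
  rintro rfl
  rw [EReal.mul_top_of_pos (EReal.coe_pos.mpr ha)] at h
  exact EReal.coe_ne_top c (top_le_iff.mp h)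

theorem Set.subsingleton_of_norm_sub_le_mul_of_neg {X Y : Type*} [NormedAddCommGroup X]
    [SeminormedAddCommGroup Y] {r : X → Y} {U : Set X} {L : ℝ} (hL : L < 0)
    (h : ∀ x₁ ∈ U, ∀ x₂ ∈ U, ‖r x₁ - r x₂‖ ≤ L * ‖x₁ - x₂‖) : U.Subsingleton := by
  intro x₁ h₁ x₂ h₂
  by_contra hne
  have hpos : 0 < ‖x₁ - x₂‖ := norm_pos_iff.mpr (sub_ne_zero.mpr hne)
  nlinarith [h x₁ h₁ x₂ h₂, norm_nonneg (r x₁ - r x₂)]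

theorem MonotoneOn.le_mul_add_of_le_add {ψ : ℝ → ℝ} {C : ℝ}
    (hmono : MonotoneOn ψ (Set.Ici 0))
    (hsub : ∀ a c : ℝ, 0 ≤ a → 0 ≤ c → ψ (a + c) ≤ C * (ψ a + ψ c)) {t a c : ℝ}
    (ht : 0 ≤ t) (ha : 0 ≤ a) (hc : 0 ≤ c) (h : t ≤ a + c) : ψ t ≤ C * (ψ a + ψ c) :=
  (hmono ht (add_nonneg ha hc) h).trans (hsub a c ha hc)

section negConj

variable {ψ : ℝ → ℝ} {s : ℝ}

theorem coe_le_negConj {t : ℝ} (ht : 0 ≤ t) : ((s * t + ψ t : ℝ) : EReal) ≤ negConj ψ s :=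
  le_iSup (fun t : {t : ℝ // 0 ≤ t} => ((s * t.1 + ψ t.1 : ℝ) : EReal)) ⟨t, ht⟩

theorem negConj_nonneg (hψ0 : ψ 0 = 0) : 0 ≤ negConj ψ s := by
  simpa [hψ0] using coe_le_negConj (ψ := ψ) (s := s) le_rfl

theorem coe_toReal_negConj (hψ0 : ψ 0 = 0) (hfin : negConj ψ s ≠ ⊤) :
    ((negConj ψ s).toReal : EReal) = negConj ψ s :=
  EReal.coe_toReal hfin (ne_bot_of_le_ne_bot EReal.zero_ne_bot (negConj_nonneg hψ0))

theorem apply_le_toReal_negConj_sub (hψ0 : ψ 0 = 0) (hfin : negConj ψ s ≠ ⊤) {t : ℝ}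
    (ht : 0 ≤ t) : ψ t ≤ (negConj ψ s).toReal - s * t := by
  have h := coe_le_negConj (ψ := ψ) (s := s) ht
  rw [← coe_toReal_negConj hψ0 hfin, EReal.coe_le_coe_iff] at h
  linarith

theorem mul_toReal_negConj_mem_Icc (hψ0 : ψ 0 = 0) {a lo hi : ℝ} (ha : 0 < a)
    (hlo : (lo : EReal) ≤ a * negConj ψ s) (hhi : (a : EReal) * negConj ψ s ≤ hi) :
    lo ≤ a * (negConj ψ s).toReal ∧ a * (negConj ψ s).toReal ≤ hi := by
  rw [← coe_toReal_negConj hψ0 (EReal.ne_top_of_coe_mul_le ha hhi), ← EReal.coe_mul]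
    at hlo hhi
  exact ⟨EReal.coe_le_coe_iff.mp hlo, EReal.coe_le_coe_iff.mp hhi⟩

end negConj

theorem ContinuousLinearMap.norm_map_sub_rpow_le_of_lipschitz {X Xt Y : Type*}
    [SeminormedAddCommGroup X] [SeminormedAddCommGroup Xt] [NormedSpace ℝ Xt]
    [SeminormedAddCommGroup Y] [NormedSpace ℝ Y] (K : Xt →L[ℝ] Y) {r : X → Xt}
    {U : Set X} {L : ℝ} (hL0 : 0 ≤ L) (hL : ∀ x₁ ∈ U, ∀ x₂ ∈ U, ‖r x₁ - r x₂‖ ≤ L * ‖x₁ - x₂‖)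
    {p : ℝ} (hp : 0 ≤ p) {x y : X} (hx : x ∈ U) (hy : y ∈ U) :
    ‖K (r x - r y)‖ ^ p ≤ ‖K‖ ^ p * L ^ p * ‖x - y‖ ^ p := by
  have h : ‖K (r x - r y)‖ ≤ ‖K‖ * (L * ‖x - y‖) :=
    (K.le_opNorm _).trans (mul_le_mul_of_nonneg_left (hL x hx y hy) (norm_nonneg K))
  calc ‖K (r x - r y)‖ ^ p ≤ (‖K‖ * (L * ‖x - y‖)) ^ p :=
        Real.rpow_le_rpow (norm_nonneg _) h hp
    _ = ‖K‖ ^ p * L ^ p * ‖x - y‖ ^ p := by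
        rw [Real.mul_rpow (norm_nonneg _) (by positivity), Real.mul_rpow hL0 (norm_nonneg _),
          mul_assoc]

theorem norm_map_sub_rpow_le_misfit {X Xt Y : Type*} [NormedAddCommGroup Xt]
    [NormedSpace ℝ Xt] [NormedAddCommGroup Y] [NormedSpace ℝ Y] (K : Xt →L[ℝ] Y) {F : X → Y}
    {r : X → Xt} {x0 xd : X}
    (hRI : F xd - F x0 = K (r xd)) {yδ : Y} {δ : ℝ} (hnoise : ‖F xd - yδ‖ ≤ δ) {p : ℝ}
    (hp : 1 ≤ p) (v : Xt) :
    ‖K (v - r xd)‖ ^ p ≤ 2 ^ (p - 1) * (‖K v + F x0 - yδ‖ ^ p + δ ^ p) := by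
  have hsplit : K (v - r xd) = (K v + F x0 - yδ) - (F xd - yδ) := by
    rw [map_sub, ← hRI]; abel
  have hδ : ‖F xd - yδ‖ ^ p ≤ δ ^ p :=
    Real.rpow_le_rpow (norm_nonneg _) hnoise (by linarith)
  rw [hsplit]
  refine (norm_sub_rpow_le _ _ hp).trans ?_
  gcongr

theorem norm_map_sub_rpow_le_penalty {X Xt Y : Type*} [NormedAddCommGroup X]
    [NormedAddCommGroup Xt] [NormedSpace ℝ Xt] [NormedAddCommGroup Y] [NormedSpace ℝ Y]
    (K : Xt →L[ℝ] Y) {U : Set X} {xd : X} (hxdU : xd ∈ U)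
    {r : X → Xt} {rinv : Xt → X} (hrmem : ∀ v, rinv v ∈ U) (hrright : ∀ v, r (rinv v) = v)
    {Lr : ℝ} (hLr : ∀ x₁ ∈ U, ∀ x₂ ∈ U, ‖r x₁ - r x₂‖ ≤ Lr * ‖x₁ - x₂‖)
    {P Ip : X → X} (hPIp : ∀ x, P x = x - Ip x) (hIprinvU : ∀ v, Ip (rinv v) ∈ U)
    {p CP : ℝ} (hp : 1 ≤ p) (hCP : 2 ^ (p - 1) * ‖K‖ ^ p * Lr ^ p ≤ CP) (v : Xt) :
    0 ≤ CP * ‖P (rinv v)‖ ^ p ∧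
      ‖K (r (Ip (rinv v)) - r xd)‖ ^ p ≤
        CP * ‖P (rinv v)‖ ^ p + 2 ^ (p - 1) * ‖K (v - r xd)‖ ^ p := by
  have hp0 : 0 < p := by linarith
  -- for `Lr < 0` the constant `Lr ^ p` is a junk value, but then `U` is a single point
  rcases lt_or_ge Lr 0 with hLr0 | hLr0
  · have hU := Set.subsingleton_of_norm_sub_le_mul_of_neg hLr0 hLr
    have hPv : P (rinv v) = 0 := by
      rw [hPIp, hU (hIprinvU v) (hrmem v), sub_self]
    rw [hPv, hU (hIprinvU v) hxdU, sub_self, map_zero, norm_zero, norm_zero,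
      Real.zero_rpow hp0.ne', mul_zero, zero_add]
    exact ⟨le_rfl, by positivity⟩
  · have hCP0 : 0 ≤ CP := le_trans (by positivity) hCP
    refine ⟨by positivity, ?_⟩
    have hlip := K.norm_map_sub_rpow_le_of_lipschitz hLr0 hLr hp0.le (hIprinvU v) (hrmem v)
    rw [norm_sub_rev (Ip _), ← hPIp] at hlip
    have hsplit : K (r (Ip (rinv v)) - r xd) =
        K (r (Ip (rinv v)) - r (rinv v)) + K (v - r xd) := by
      rw [← map_add, hrright]; abel_nf
    calc ‖K (r (Ip (rinv v)) - r xd)‖ ^ p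
        ≤ 2 ^ (p - 1) * (‖K (r (Ip (rinv v)) - r (rinv v))‖ ^ p + ‖K (v - r xd)‖ ^ p) := by
          rw [hsplit]; exact norm_add_rpow_le _ _ hp
      _ ≤ 2 ^ (p - 1) * (‖K‖ ^ p * Lr ^ p * ‖P (rinv v)‖ ^ p + ‖K (v - r xd)‖ ^ p) := by
          gcongr
      _ ≤ CP * ‖P (rinv v)‖ ^ p + 2 ^ (p - 1) * ‖K (v - r xd)‖ ^ p := by
          nlinarith [mul_le_mul_of_nonneg_right hCP
            (Real.rpow_nonneg (norm_nonneg (P (rinv v))) p)]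

theorem tikhonov_estimate {X Xt Y : Type*} [NormedAddCommGroup X] [NormedSpace ℝ X]
    [NormedAddCommGroup Xt] [NormedSpace ℝ Xt] [NormedAddCommGroup Y] [NormedSpace ℝ Y]
    {Xc : Submodule ℝ X} {U : Set X} {x0 xd : X} (hxdU : xd ∈ U) {F : X → Y}
    {K : Xt →L[ℝ] Y} {r : X → Xt} {rinv : Xt → X} (hrleft : ∀ x ∈ U, rinv (r x) = x)
    (hRI : F xd - F x0 = K (r xd)) {P Ip : X → X} (hPIp : ∀ x, P x = x - Ip x)
    (hIpXc : ∀ x, Ip x ∈ Xc) (hPxd : P xd = 0) (hIprinvU : ∀ v, Ip (rinv v) ∈ U)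
    {δ : ℝ} {yδ : Y} (hnoise : ‖F xd - yδ‖ ≤ δ) {Rc RP : X → ℝ} {ξ : X →L[ℝ] ℝ}
    {ψ : ℝ → ℝ} {p b γ Cψ Cb CP α η E : ℝ} (hp : 1 ≤ p) (hα : 0 < α) (hCψ : 0 < Cψ)
    (hCb : Cb = 2 ^ (2 * p - 2) * Cψ)
    (hVSC : ∀ xc, xc ∈ Xc → xc ∈ U →
      -(ξ (xc - xd)) ≤ b * (Rc xc - Rc xd - ξ (xc - xd)) + ψ (‖K (r xc - r xd)‖ ^ p))
    (hψmono : MonotoneOn ψ (Set.Ici 0))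
    (hψsub : ∀ a c : ℝ, 0 ≤ a → 0 ≤ c → ψ (a + c) ≤ Cψ * (ψ a + ψ c))
    (hRP0 : RP 0 = 0) (hRPlb : ∀ v : X, γ * ψ (CP * ‖v‖ ^ p) ≤ RP v)
    (hFY : ∀ t, 0 ≤ t → ψ t ≤ E + t / (2 * Cb * α)) {v : Xt}
    (hPen0 : 0 ≤ CP * ‖P (rinv v)‖ ^ p)
    (hW : ‖K (r (Ip (rinv v)) - r xd)‖ ^ p ≤
      CP * ‖P (rinv v)‖ ^ p + 2 ^ (p - 1) * ‖K (v - r xd)‖ ^ p)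
    (hB : ‖K (v - r xd)‖ ^ p ≤ 2 ^ (p - 1) * (‖K v + F x0 - yδ‖ ^ p + δ ^ p))
    (hmin : ‖K v + F x0 - yδ‖ ^ p + α * (Rc (Ip (rinv v)) + RP (P (rinv v))) ≤
      ‖K (r xd) + F x0 - yδ‖ ^ p + α * (Rc (Ip (rinv (r xd))) + RP (P (rinv (r xd)))) + η) :
    α * ((1 - b) * (Rc (Ip (rinv v)) - Rc xd - ξ (Ip (rinv v) - xd))) +
        α * ((γ - Cψ) * ψ (CP * ‖P (rinv v)‖ ^ p)) + ‖K v + F x0 - yδ‖ ^ p / 2 ≤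
      3 / 2 * δ ^ p + η + α * Cψ * E := by
  set d := ‖K v + F x0 - yδ‖ ^ p
  have hIpxd : Ip xd = xd := by
    rw [← sub_eq_zero, ← neg_sub, ← hPIp, hPxd, neg_zero]
  have hcmp : d + α * (Rc (Ip (rinv v)) + RP (P (rinv v))) ≤ δ ^ p + α * Rc xd + η := by
    have hKxd : K (r xd) + F x0 - yδ = F xd - yδ := by rw [← hRI]; abel
    rw [hrleft xd hxdU, hIpxd, hPxd, hRP0, add_zero, hKxd] at hmin
    linarith [Real.rpow_le_rpow (norm_nonneg _) hnoise (by linarith : 0 ≤ p)]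
  have hψW : ψ (‖K (r (Ip (rinv v)) - r xd)‖ ^ p) ≤
      Cψ * (ψ (CP * ‖P (rinv v)‖ ^ p) + ψ (2 ^ (p - 1) * ‖K (v - r xd)‖ ^ p)) :=
    hψmono.le_mul_add_of_le_add hψsub (by positivity) hPen0 (by positivity) hW
  have htwo : (2 : ℝ) ^ (p - 1) * 2 ^ (p - 1) = 2 ^ (2 * p - 2) := by
    rw [← Real.rpow_add two_pos]; ring_nf
  -- the weight `1 / (2 C̄ α)` of the conjugate makes the data term reappear with factor `1/2`
  have hFYB : α * Cψ * ψ (2 ^ (p - 1) * ‖K (v - r xd)‖ ^ p) ≤ α * Cψ * E + (d + δ ^ p) / 2 :=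
    calc α * Cψ * ψ (2 ^ (p - 1) * ‖K (v - r xd)‖ ^ p)
        ≤ α * Cψ * (E + 2 ^ (p - 1) * ‖K (v - r xd)‖ ^ p / (2 * Cb * α)) := by
          gcongr; exact hFY _ (by positivity)
      _ ≤ α * Cψ * (E + 2 ^ (p - 1) * (2 ^ (p - 1) * (d + δ ^ p)) / (2 * Cb * α)) := by
          rw [hCb]; gcongr
      _ = α * Cψ * E + (d + δ ^ p) / 2 := by
          rw [← mul_assoc, htwo, hCb]; field_simp
  have hvsc := hVSC _ (hIpXc (rinv v)) (hIprinvU v)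
  linarith [mul_le_mul_of_nonneg_left hvsc hα.le, mul_le_mul_of_nonneg_left hψW hα.le,
    mul_le_mul_of_nonneg_left (hRPlb (P (rinv v))) hα.le]

theorem split_step_estimate {X Xt : Type*} [NormedAddCommGroup X] {U : Set X} {xd xsm : X}
    (hxdU : xd ∈ U) {r : X → Xt} {P : X → X} (hPxd : P xd = 0) {Q : Xt → Xt → ℝ}
    {p β η A : ℝ} (hp : p ≠ 0) (hβ : 0 < β) {v : Xt}
    (hQ : Q (r xd) v ^ p ≤ A)
    (hmin : ∀ x ∈ U, β * Q (r xsm) v ^ p + ‖P xsm‖ ^ p ≤ β * Q (r x) v ^ p + ‖P x‖ ^ p + η) :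
    Q (r xsm) v ^ p + 1 / β * ‖P xsm‖ ^ p ≤ A + η / β := by
  have h := hmin xd hxdU
  rw [hPxd, norm_zero, Real.zero_rpow hp, add_zero] at h
  rw [← mul_le_mul_iff_right₀ hβ]
  field_simp
  nlinarith [mul_le_mul_of_nonneg_left hQ hβ.le]

noncomputable def rateConst (p b γ Cψ CtQ Cη τl τu : ℝ) : ℝ :=
  (1 + CtQ) * (((3 / 2 + Cη) / τl + Cψ) / min (1 - b) (γ - Cψ)) + Cη / τl +
    2 ^ (p - 1) * (4 + 2 * Cη + 2 * Cψ * τu)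

theorem rateConst_pos {p b γ Cψ CtQ Cη τl τu : ℝ} (hb1 : b < 1) (hγ : Cψ < γ) (hCψ : 0 ≤ Cψ)
    (hCtQ : 0 ≤ CtQ) (hCη : 0 ≤ Cη) (hτl : 0 < τl) (hτu : 0 ≤ τu) :
    0 < rateConst p b γ Cψ CtQ Cη τl τu := by
  have hm : 0 < min (1 - b) (γ - Cψ) := lt_min (by linarith) (by linarith)
  unfold rateConst
  positivity

theorem rates_of_tikhonov_estimate {p b γ Cψ CtQ Cη τl τu α β η δp E Δ Ψ d B q w : ℝ}
    (hb1 : b < 1) (hγ : Cψ < γ) (hCψ : 0 ≤ Cψ) (hCtQ : 0 ≤ CtQ) (hCη : 0 ≤ Cη) (hτl : 0 < τl)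
    (hτu : 0 ≤ τu) (hα : 0 < α) (hαβ : α ≤ β) (hη0 : 0 ≤ η) (hη : η ≤ Cη * δp)
    (hδp : 0 ≤ δp) (hlo : τl * δp ≤ α * E) (hhi : α * E ≤ τu * δp)
    (hΔ : 0 ≤ Δ) (hΨ : 0 ≤ Ψ) (hd : 0 ≤ d)
    (hkey : α * ((1 - b) * Δ) + α * ((γ - Cψ) * Ψ) + d / 2 ≤ 3 / 2 * δp + η + α * Cψ * E)
    (hqw : q + w ≤ CtQ * (Δ + Ψ) + η / β) (hB : B ≤ 2 ^ (p - 1) * (d + δp)) :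
    Δ + Ψ + q + w ≤ rateConst p b γ Cψ CtQ Cη τl τu * E ∧
      B ≤ rateConst p b γ Cψ CtQ Cη τl τu * δp := by
  unfold rateConst
  set m := min (1 - b) (γ - Cψ)
  set c := (3 / 2 + Cη) / τl + Cψ
  have hm : 0 < m := lt_min (by linarith) (by linarith)
  have hE : 0 ≤ E := nonneg_of_mul_nonneg_right (by nlinarith) hα
  have hδE : δp ≤ α * E / τl := by rw [le_div_iff₀ hτl]; linarith
  have hΔΨ : Δ + Ψ ≤ c / m * E := by
    have hmΔΨ : α * (m * (Δ + Ψ)) ≤ α * (c * E) := by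
      have h1 : m * Δ ≤ (1 - b) * Δ := mul_le_mul_of_nonneg_right (min_le_left _ _) hΔ
      have h2 : m * Ψ ≤ (γ - Cψ) * Ψ := mul_le_mul_of_nonneg_right (min_le_right _ _) hΨ
      have h3 : (3 / 2 + Cη) * δp ≤ (3 / 2 + Cη) * (α * E / τl) := by gcongr
      have h4 : (3 / 2 + Cη) * (α * E / τl) = α * ((3 / 2 + Cη) / τl * E) := by ring
      nlinarith
    rw [div_mul_eq_mul_div, le_div_iff₀ hm]
    nlinarith
  have hd' : d ≤ (3 + 2 * Cη + 2 * Cψ * τu) * δp := by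
    nlinarith [mul_le_mul_of_nonneg_left hhi hCψ,
      mul_nonneg hα.le (mul_nonneg (sub_nonneg.mpr hb1.le) hΔ),
      mul_nonneg hα.le (mul_nonneg (sub_nonneg.mpr hγ.le) hΨ)]
  have hηβ : η / β ≤ Cη / τl * E :=
    calc η / β ≤ η / α := div_le_div_of_nonneg_left hη0 hα hαβ
      _ ≤ Cη * (α * E / τl) / α := by gcongr; exact hη.trans (by gcongr)
      _ = Cη / τl * E := by field_simp
  have hc : 0 ≤ (1 + CtQ) * (c / m) + Cη / τl := by positivity
  have hc' : 0 ≤ 2 ^ (p - 1) * (4 + 2 * Cη + 2 * Cψ * τu) := by positivity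
  constructor
  · calc Δ + Ψ + q + w ≤ (1 + CtQ) * (Δ + Ψ) + η / β := by nlinarith
      _ ≤ (1 + CtQ) * (c / m * E) + Cη / τl * E := by gcongr
      _ ≤ _ := by nlinarith [mul_nonneg hc' hE]
  · calc B ≤ 2 ^ (p - 1) * ((3 + 2 * Cη + 2 * Cψ * τu) * δp + δp) := hB.trans (by gcongr)
      _ ≤ _ := by nlinarith [mul_nonneg hc hδp]

universe u v w

theorem stmt_7_general (p b γ Cψ CtQ Cη τl τu Cb : ℝ)
    (hp : 1 ≤ p) (hb1 : b < 1) (hCψ : 1 ≤ Cψ) (hγ : Cψ < γ)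
    (hCtQ : 0 < CtQ) (hCη : 0 < Cη) (hτl : 0 < τl) (hτlu : τl ≤ τu)
    (hCb : Cb = (2 : ℝ) ^ (2 * p - 2) * Cψ) :
    ∃ C : ℝ, 0 < C ∧
      ∀ {X : Type u} {Xt : Type v} {Y : Type w}
      [NormedAddCommGroup X] [NormedSpace ℝ X]
      [NormedAddCommGroup Xt] [NormedSpace ℝ Xt]
      [NormedAddCommGroup Y] [NormedSpace ℝ Y]
    
    (Xc : Submodule ℝ X) (U : Set X) (x0 xd : X)
    (hx0U : x0 ∈ U) (hx0c : x0 ∈ Xc) (hxdU : xd ∈ U) (hxdc : xd ∈ Xc)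
    (F : X → Y) (K : Xt →L[ℝ] Y)
    (r : X → Xt) (rinv : Xt → X)
    (hrleft : ∀ x ∈ U, rinv (r x) = x)
    (hrmem : ∀ v : Xt, rinv v ∈ U) (hrright : ∀ v : Xt, r (rinv v) = v)
    (Lr : ℝ) (hLr : ∀ x1 ∈ U, ∀ x2 ∈ U, ‖r x1 - r x2‖ ≤ Lr * ‖x1 - x2‖)
    (hRI : ∀ x ∈ U, F x - F x0 = K (r x))
    (P Ip : X → X) (hPIp : ∀ x, P x = x - Ip x)
    (hIpXc : ∀ x, Ip x ∈ Xc)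
    (hPxd : P xd = 0) (hPx0 : P x0 = 0)
    (hIprinvU : ∀ v : Xt, Ip (rinv v) ∈ U)
    (δ : ℝ) (hδ : 0 < δ) (yδ : Y) (hnoise : ‖F xd - yδ‖ ≤ δ)
    (Rc : X → ℝ) (hRcnn : ∀ x, 0 ≤ Rc x)
    (ξ : X →L[ℝ] ℝ) (hξ : ∀ xc ∈ Xc, ξ (xc - xd) ≤ Rc xc - Rc xd)
    (ψ : ℝ → ℝ) (hψcont : ContinuousOn ψ (Set.Ici (0 : ℝ)))
    (hψmono : MonotoneOn ψ (Set.Ici (0 : ℝ)))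
    (hψ0 : ψ 0 = 0) (hψnn : ∀ t : ℝ, 0 ≤ t → 0 ≤ ψ t)
    (hVSC : ∀ xc, xc ∈ Xc → xc ∈ U →
      -(ξ (xc - xd)) ≤ b * (Rc xc - Rc xd - ξ (xc - xd)) + ψ (‖K (r xc - r xd)‖ ^ p))
      (Q : Xt → Xt → ℝ) (hQnn : ∀ v1 v2, 0 ≤ Q v1 v2) (hQdiag : ∀ v, Q v v = 0)
      (hψsub : ∀ a c : ℝ, 0 ≤ a → 0 ≤ c → ψ (a + c) ≤ Cψ * (ψ a + ψ c))
      (RP : X → ℝ) (hRP0 : RP 0 = 0) (hRPnn : ∀ v, 0 ≤ RP v)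
      (CP : ℝ) (hCP : (2 : ℝ) ^ (p - 1) * ‖K‖ ^ p * Lr ^ p ≤ CP)
      (hRPlb : ∀ v : X, γ * ψ (CP * ‖v‖ ^ p) ≤ RP v)
      (hQt : ∀ v : Xt, Q (r xd) v ^ p ≤
        CtQ * ((Rc (Ip (rinv v)) - Rc xd - ξ (Ip (rinv v) - xd)) +
          ψ (CP * ‖P (rinv v)‖ ^ p)))
      (α β η : ℝ) (hα : 0 < α) (hβ : 0 < β) (hαβ : α ≤ β)
      (hη0 : 0 ≤ η) (hη : η ≤ Cη * δ ^ p)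
      (hfin : negConj ψ (-(1 / (Cb * α))) ≠ ⊤)
      (hpar1 : ((τl * δ ^ p : ℝ) : EReal) ≤ (α : ℝ) * negConj ψ (-(1 / (2 * Cb * α))))
      (hpar2 : ((α : ℝ) : EReal) * negConj ψ (-(1 / (2 * Cb * α))) ≤ ((τu * δ ^ p : ℝ) : EReal))
      (Jα : Xt → ℝ)
      (hJα : ∀ v, Jα v = ‖K v + F x0 - yδ‖ ^ p +
        α * (Rc (Ip (rinv v)) + RP (P (rinv v))))
      (Jβ : Xt → X → ℝ)
      (hJβ : ∀ v x, Jβ v x = β * Q (r x) v ^ p + ‖P x‖ ^ p)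
      (rsm : Xt) (xsm : X) (_ : xsm ∈ U)
      (hmin1 : ∀ v : Xt, Jα rsm ≤ Jα v + η)
      (hmin2 : ∀ x ∈ U, Jβ rsm xsm ≤ Jβ rsm x + η),
      (Rc (Ip (rinv rsm)) - Rc xd - ξ (Ip (rinv rsm) - xd)) +
          ψ (CP * ‖P (rinv rsm)‖ ^ p) +
          Q (r xsm) rsm ^ p + (1 / β) * ‖P xsm‖ ^ p ≤
        C * (negConj ψ (-(1 / (2 * Cb * α)))).toReal ∧
      ‖K (rsm - r xd)‖ ^ p ≤ C * δ ^ p := by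
  have hCψ0 : 0 < Cψ := by linarith
  refine ⟨rateConst p b γ Cψ CtQ Cη τl τu,
    rateConst_pos hb1 hγ hCψ0.le hCtQ.le hCη.le hτl (hτl.le.trans hτlu), ?_⟩
  intro X Xt Y _ _ _ _ _ _ Xc U x0 xd _ _ hxdU _ F K r rinv hrleft hrmem hrright Lr hLr hRI P Ip
    hPIp hIpXc hPxd _ hIprinvU δ hδ yδ hnoise Rc _ ξ hξ ψ _ hψmono hψ0 hψnn hVSC Q _ _ hψsub RP
    hRP0 _ CP hCP hRPlb hQt α β η hα hβ hαβ hη0 hη _ hpar1 hpar2 Jα hJα Jβ hJβ rsm xsm _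
    hmin1 hmin2
  have hfin := EReal.ne_top_of_coe_mul_le hα hpar2
  obtain ⟨hlo, hhi⟩ := mul_toReal_negConj_mem_Icc hψ0 hα hpar1 hpar2
  have hFY (t : ℝ) (ht : 0 ≤ t) :
      ψ t ≤ (negConj ψ (-(1 / (2 * Cb * α)))).toReal + t / (2 * Cb * α) := by
    have h := apply_le_toReal_negConj_sub hψ0 hfin ht
    rwa [neg_mul, sub_neg_eq_add, one_div_mul_eq_div] at h
  obtain ⟨hPen0, hW⟩ :=
    norm_map_sub_rpow_le_penalty K hxdU hrmem hrright hLr hPIp hIprinvU hp hCP rsm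
  have hB := norm_map_sub_rpow_le_misfit K (hRI xd hxdU) hnoise hp rsm
  have hkey := tikhonov_estimate hxdU hrleft (hRI xd hxdU) hPIp hIpXc hPxd hIprinvU hnoise hp hα
    hCψ0 hCb hVSC hψmono hψsub hRP0 hRPlb hFY hPen0 hW hB
    (by simpa only [hJα] using hmin1 (r xd))
  have hqw := split_step_estimate hxdU hPxd (by linarith : p ≠ 0) hβ (hQt rsm)
    (fun x hx => by simpa only [hJβ] using hmin2 x hx)
  exact rates_of_tikhonov_estimate hb1 hγ hCψ0.le hCtQ.le hCη.le hτl (hτl.le.trans hτlu) hα hαβ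
    hη0 hη (Real.rpow_nonneg hδ.le p) hlo hhi (sub_nonneg.mpr (hξ _ (hIpXc _)))
    (hψnn _ hPen0) (Real.rpow_nonneg (norm_nonneg _) p) hkey hqw hB

/-- Convergence rates for the split minimization method (Theorem 2.5): there is a
constant `C` depending only on `p, b, γ, C_ψ, C̃_Q, C_η, τ̲, τ̄` such that the split
minimizers satisfy the stated rate estimates. -/
theorem stmt_7 (p b γ Cψ CtQ Cη τl τu Cb : ℝ)
    (hp : 1 ≤ p) (hb0 : 0 < b) (hb1 : b < 1) (hCψ : 1 ≤ Cψ) (hγ : Cψ < γ)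
    (hCtQ : 0 < CtQ) (hCη : 0 < Cη) (hτl : 0 < τl) (hτlu : τl ≤ τu)
    (hCb : Cb = (2 : ℝ) ^ (2 * p - 2) * Cψ) :
    ∃ C : ℝ, 0 < C ∧
      ∀ {X : Type u} {Xt : Type v} {Y : Type w}
      [NormedAddCommGroup X] [NormedSpace ℝ X]
      [NormedAddCommGroup Xt] [NormedSpace ℝ Xt]
      [NormedAddCommGroup Y] [NormedSpace ℝ Y]
    
    (Xc : Submodule ℝ X) (U : Set X) (x0 xd : X)
    (hx0U : x0 ∈ U) (hx0c : x0 ∈ Xc) (hxdU : xd ∈ U) (hxdc : xd ∈ Xc)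
    (F : X → Y) (K : Xt →L[ℝ] Y)
    (r : X → Xt) (rinv : Xt → X)
    (hrleft : ∀ x ∈ U, rinv (r x) = x)
    (hrmem : ∀ v : Xt, rinv v ∈ U) (hrright : ∀ v : Xt, r (rinv v) = v)
    (Lr : ℝ) (hLr : ∀ x1 ∈ U, ∀ x2 ∈ U, ‖r x1 - r x2‖ ≤ Lr * ‖x1 - x2‖)
    (hRI : ∀ x ∈ U, F x - F x0 = K (r x))
    (P Ip : X → X) (hPIp : ∀ x, P x = x - Ip x)
    (hIpXc : ∀ x, Ip x ∈ Xc)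
    (hPxd : P xd = 0) (hPx0 : P x0 = 0)
    (hIprinvU : ∀ v : Xt, Ip (rinv v) ∈ U)
    (δ : ℝ) (hδ : 0 < δ) (yδ : Y) (hnoise : ‖F xd - yδ‖ ≤ δ)
    (Rc : X → ℝ) (hRcnn : ∀ x, 0 ≤ Rc x)
    (ξ : X →L[ℝ] ℝ) (hξ : ∀ xc ∈ Xc, ξ (xc - xd) ≤ Rc xc - Rc xd)
    (ψ : ℝ → ℝ) (hψcont : ContinuousOn ψ (Set.Ici (0 : ℝ)))
    (hψmono : MonotoneOn ψ (Set.Ici (0 : ℝ)))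
    (hψ0 : ψ 0 = 0) (hψnn : ∀ t : ℝ, 0 ≤ t → 0 ≤ ψ t)
    (hVSC : ∀ xc, xc ∈ Xc → xc ∈ U →
      -(ξ (xc - xd)) ≤ b * (Rc xc - Rc xd - ξ (xc - xd)) + ψ (‖K (r xc - r xd)‖ ^ p))
      (Q : Xt → Xt → ℝ) (hQnn : ∀ v1 v2, 0 ≤ Q v1 v2) (hQdiag : ∀ v, Q v v = 0)
      (hψsub : ∀ a c : ℝ, 0 ≤ a → 0 ≤ c → ψ (a + c) ≤ Cψ * (ψ a + ψ c))
      (RP : X → ℝ) (hRP0 : RP 0 = 0) (hRPnn : ∀ v, 0 ≤ RP v)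
      (CP : ℝ) (hCP : (2 : ℝ) ^ (p - 1) * ‖K‖ ^ p * Lr ^ p ≤ CP)
      (hRPlb : ∀ v : X, γ * ψ (CP * ‖v‖ ^ p) ≤ RP v)
      (hQt : ∀ v : Xt, Q (r xd) v ^ p ≤
        CtQ * ((Rc (Ip (rinv v)) - Rc xd - ξ (Ip (rinv v) - xd)) +
          ψ (CP * ‖P (rinv v)‖ ^ p)))
      (α β η : ℝ) (hα : 0 < α) (hβ : 0 < β) (hαβ : α ≤ β)
      (hη0 : 0 ≤ η) (hη : η ≤ Cη * δ ^ p)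
      (hfin : negConj ψ (-(1 / (Cb * α))) ≠ ⊤)
      (hpar1 : ((τl * δ ^ p : ℝ) : EReal) ≤ (α : ℝ) * negConj ψ (-(1 / (2 * Cb * α))))
      (hpar2 : ((α : ℝ) : EReal) * negConj ψ (-(1 / (2 * Cb * α))) ≤ ((τu * δ ^ p : ℝ) : EReal))
      (Jα : Xt → ℝ)
      (hJα : ∀ v, Jα v = ‖K v + F x0 - yδ‖ ^ p +
        α * (Rc (Ip (rinv v)) + RP (P (rinv v))))
      (Jβ : Xt → X → ℝ)
      (hJβ : ∀ v x, Jβ v x = β * Q (r x) v ^ p + ‖P x‖ ^ p)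
      (rsm : Xt) (xsm : X) (_ : xsm ∈ U)
      (hmin1 : ∀ v : Xt, Jα rsm ≤ Jα v + η)
      (hmin2 : ∀ x ∈ U, Jβ rsm xsm ≤ Jβ rsm x + η),
      (Rc (Ip (rinv rsm)) - Rc xd - ξ (Ip (rinv rsm) - xd)) +
          ψ (CP * ‖P (rinv rsm)‖ ^ p) +
          Q (r xsm) rsm ^ p + (1 / β) * ‖P xsm‖ ^ p ≤
        C * (negConj ψ (-(1 / (2 * Cb * α)))).toReal ∧
      ‖K (rsm - r xd)‖ ^ p ≤ C * δ ^ p :=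
  stmt_7_general p b γ Cψ CtQ Cη τl τu Cb hp hb1 hCψ hγ hCtQ hCη hτl hτlu hCb
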